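/- For every z = (x_C, x_S, x_R) ∈ ℝ³, the iterated Lie bracket of f with [g_P, g_V] is given explicitly by [f, [g_P, g_V]](z) = (x_S (1 − x_S − x_R) ((β̂ − β)(c_I − c_P) + β c_V γ), 0, 0). -/

import Mathlib

noncomputable section

/-- Drift vector field of the Mayer-form SIRI dynamics, `z = (x_C, x_S, x_R)`. -/
def fVec (cP cI γ : ℝ) (z : ℝ × ℝ × ℝ) : ℝ × ℝ × ℝ :=
  (cP * (z.2.1 + z.2.2) + cI * (1 - z.2.1 - z.2.2), 0, γ * (1 - z.2.1 - z.2.2))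

/-- Control vector field for the protection input. -/
def gPVec (β βh cP : ℝ) (z : ℝ × ℝ × ℝ) : ℝ × ℝ × ℝ :=
  (-(cP * (z.2.1 + z.2.2)), -(β * z.2.1 * (1 - z.2.1 - z.2.2)),
    -(βh * z.2.2 * (1 - z.2.1 - z.2.2)))

/-- Control vector field for the vaccination input. -/
def gVVec (cV : ℝ) (z : ℝ × ℝ × ℝ) : ℝ × ℝ × ℝ := (cV * z.2.1, -z.2.1, z.2.1)

/-- Lie bracket of two vector fields on `ℝ³`:
`[X, Y](z) = DY(z) X(z) − DX(z) Y(z)`, where `D` is the Fréchet derivative. -/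
def lieBr (X Y : ℝ × ℝ × ℝ → ℝ × ℝ × ℝ) (z : ℝ × ℝ × ℝ) : ℝ × ℝ × ℝ :=
  fderiv ℝ Y z (X z) - fderiv ℝ X z (Y z)

/-! Both `g_V = x_S • (c_V, -1, 1)` and `[g_P, g_V] = x_S x_I • (-β c_V, 0, β̂ - β)` are scalar
multiples of constant fields, with `x_I = 1 - x_S - x_R`, and the bracket of `X` with `φ • a` is
`(Dφ X) • a - φ • (DX a)`. So each bracket needs only one directional derivative of the other
field: `Dg_P (c_V, -1, 1) = (0, β x_I, -β̂ x_I)` because `(c_V, -1, 1)` leaves `x_S + x_R` fixed,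
and `Df` only sees the change of `x_S + x_R`. -/

namespace SIRI

open ContinuousLinearMap

theorem lieBr_smul_const {X : ℝ × ℝ × ℝ → ℝ × ℝ × ℝ} {φ : ℝ × ℝ × ℝ → ℝ}
    {φ' : (ℝ × ℝ × ℝ) →L[ℝ] ℝ} {z : ℝ × ℝ × ℝ} (hφ : HasFDerivAt φ φ' z) (a : ℝ × ℝ × ℝ) :
    lieBr X (fun y => φ y • a) z = φ' (X z) • a - φ z • fderiv ℝ X z a := by
  rw [lieBr, (hφ.smul_const a).fderiv, map_smul, smulRight_apply]

section

variable {E F G : Type*} [NormedAddCommGroup E] [NormedSpace ℝ E] [NormedAddCommGroup F]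
  [NormedSpace ℝ F] [NormedAddCommGroup G] [NormedSpace ℝ G]

theorem hasFDerivAt_snd_fst (z : E × F × G) :
    HasFDerivAt (fun y : E × F × G => y.2.1) ((fst ℝ F G).comp (snd ℝ E (F × G))) z :=
  hasFDerivAt_snd.fst

theorem hasFDerivAt_snd_snd (z : E × F × G) :
    HasFDerivAt (fun y : E × F × G => y.2.2) ((snd ℝ F G).comp (snd ℝ E (F × G))) z :=
  hasFDerivAt_snd.snd

end

theorem hasFDerivAt_infected (z : ℝ × ℝ × ℝ) :
    HasFDerivAt (fun y : ℝ × ℝ × ℝ => 1 - y.2.1 - y.2.2)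
      (-(fst ℝ ℝ ℝ).comp (snd ℝ ℝ (ℝ × ℝ)) - (snd ℝ ℝ ℝ).comp (snd ℝ ℝ (ℝ × ℝ))) z :=
  ((hasFDerivAt_snd_fst z).const_sub 1).sub (hasFDerivAt_snd_snd z)

theorem fderiv_gPVec_apply (β βh cP : ℝ) (z v : ℝ × ℝ × ℝ) :
    fderiv ℝ (gPVec β βh cP) z v =
      (-(cP * (v.2.1 + v.2.2)),
        -(β * (v.2.1 * (1 - z.2.1 - z.2.2) - z.2.1 * (v.2.1 + v.2.2))),
        -(βh * (v.2.2 * (1 - z.2.1 - z.2.2) - z.2.2 * (v.2.1 + v.2.2)))) := by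
  have hS := hasFDerivAt_snd_fst z
  have hR := hasFDerivAt_snd_snd z
  have hI := hasFDerivAt_infected z
  have h : HasFDerivAt (gPVec β βh cP) _ z := (((hS.add hR).const_mul cP).neg).prodMk
    ((((hS.const_mul β).mul hI).neg).prodMk (((hR.const_mul βh).mul hI).neg))
  rw [h.fderiv]
  ext <;> simp only [prod_apply, add_apply, sub_apply, neg_apply, smul_apply, comp_apply,
    coe_fst', coe_snd', smul_eq_mul] <;> ring

theorem fderiv_fVec_apply (cP cI γ : ℝ) (z v : ℝ × ℝ × ℝ) :
    fderiv ℝ (fVec cP cI γ) z v =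
      ((cP - cI) * (v.2.1 + v.2.2), 0, -(γ * (v.2.1 + v.2.2))) := by
  have hS := hasFDerivAt_snd_fst z
  have hR := hasFDerivAt_snd_snd z
  have hI := hasFDerivAt_infected z
  have h : HasFDerivAt (fVec cP cI γ) _ z :=
    (((hS.add hR).const_mul cP).add (hI.const_mul cI)).prodMk
      ((hasFDerivAt_const 0 z).prodMk (hI.const_mul γ))
  rw [h.fderiv]
  ext <;> simp only [prod_apply, add_apply, sub_apply, neg_apply, smul_apply, comp_apply,
    coe_fst', coe_snd', zero_apply, smul_eq_mul] <;> ring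

theorem gVVec_eq_smul (cV : ℝ) : gVVec cV = fun z => z.2.1 • (cV, -1, 1) := by
  ext z <;> simp [gVVec, mul_comm]

theorem lieBr_gPVec_gVVec (β βh cP cV : ℝ) :
    lieBr (gPVec β βh cP) (gVVec cV) =
      fun z => (z.2.1 * (1 - z.2.1 - z.2.2)) • (-(β * cV), 0, βh - β) := by
  funext z
  rw [gVVec_eq_smul, lieBr_smul_const (hasFDerivAt_snd_fst z), fderiv_gPVec_apply]
  ext <;> simp only [gPVec, comp_apply, coe_fst', coe_snd', Prod.fst_sub, Prod.snd_sub,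
    Prod.smul_fst, Prod.smul_snd, smul_eq_mul] <;> ring

end SIRI

open SIRI ContinuousLinearMap

theorem siri_lie_f_gPgV_general
    (β βh γ cP cV cI : ℝ) :
    ∀ z : ℝ × ℝ × ℝ,
      lieBr (fVec cP cI γ) (lieBr (gPVec β βh cP) (gVVec cV)) z =
        (z.2.1 * (1 - z.2.1 - z.2.2) * ((βh - β) * (cI - cP) + β * cV * γ),
          0, 0) := by
  intro z
  have hSI : HasFDerivAt (fun y : ℝ × ℝ × ℝ => y.2.1 * (1 - y.2.1 - y.2.2)) _ z :=
    (hasFDerivAt_snd_fst z).mul (hasFDerivAt_infected z)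
  rw [lieBr_gPVec_gVVec, lieBr_smul_const hSI, fderiv_fVec_apply]
  ext <;> simp only [fVec, add_apply, sub_apply, neg_apply, smul_apply, comp_apply, coe_fst',
    coe_snd', Prod.fst_sub, Prod.snd_sub, Prod.smul_fst, Prod.smul_snd, smul_eq_mul] <;> ring

/-- explicit formula for `[f, [g_P, g_V]]`. -/
theorem siri_lie_f_gPgV
    (β βh γ cP cV cI : ℝ)
    (hβ : 0 < β) (hβh : 0 < βh) (hγ : 0 < γ)
    (hcP : 0 < cP) (hcV : 0 < cV) (hcI : 0 < cI) :
    ∀ z : ℝ × ℝ × ℝ,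
      lieBr (fVec cP cI γ) (lieBr (gPVec β βh cP) (gVVec cV)) z =
        (z.2.1 * (1 - z.2.1 - z.2.2) * ((βh - β) * (cI - cP) + β * cV * γ),
          0, 0) :=
  siri_lie_f_gPgV_general β βh γ cP cV cI
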